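/- arXiv:1507.00249 — 2 statements merged into one kernel-verified Lean document; each statement's English description precedes it below -/
import Mathlib

section
/- For any finite poset P and any m ≥ 1, the weak distribution μ_{m,≤} on J(P) is toggle-symmetric. -/
open Finset
open scoped Classical

noncomputable section

variable {α : Type*} [Fintype α] [PartialOrder α]

/-- `I` is an order ideal (down-set) of the finite poset `α`. -/
def IsIdeal (I : Finset α) : Prop := ∀ p ∈ I, ∀ q : α, q ≤ p → q ∈ I

/-- The set `J(P)` of all order ideals of the finite poset `α`. -/
def idealsFinset (α : Type*) [Fintype α] [PartialOrder α] : Finset (Finset α) :=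
  Finset.univ.filter fun I => IsIdeal I

/-- `p` can be toggled in to the order ideal `I`. -/
def CanToggleIn (I : Finset α) (p : α) : Prop := p ∉ I ∧ IsIdeal (insert p I)

/-- `p` can be toggled out of the order ideal `I`. -/
def CanToggleOut (I : Finset α) (p : α) : Prop := p ∈ I ∧ IsIdeal (I.erase p)

/-- The jaggedness of `I`: the number of elements that can be toggled in,
plus the number of elements that can be toggled out. -/
def jag (I : Finset α) : ℕ :=
  (Finset.univ.filter fun p => CanToggleIn I p).card +
  (Finset.univ.filter fun p => CanToggleOut I p).card

/-- The probability, under `μ`, that a random order ideal satisfies `E`. -/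
def prIdeal (μ : Finset α → ℝ) (E : Finset α → Prop) : ℝ :=
  ∑ I ∈ (idealsFinset α).filter E, μ I

/-- `μ` is toggle-symmetric: for every `p`, the probability that `p` can be toggled in
equals the probability that `p` can be toggled out. -/
def ToggleSymmetric (μ : Finset α → ℝ) : Prop :=
  ∀ p : α, prIdeal μ (fun I => CanToggleIn I p) = prIdeal μ (fun I => CanToggleOut I p)

/-- `μ` is a probability distribution on `J(P)`. -/
def IsProbDist (μ : Finset α → ℝ) : Prop :=
  (∀ I, 0 ≤ μ I) ∧ (∀ I, ¬ IsIdeal I → μ I = 0) ∧ (∑ I ∈ idealsFinset α, μ I = 1)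

/-- The expectation of the statistic `f` with respect to `μ`. -/
def expectStat (μ : Finset α → ℝ) (f : Finset α → ℝ) : ℝ :=
  ∑ I ∈ idealsFinset α, μ I * f I

/-- The linear extensions of `α`: order-preserving bijections `α ≃ {1,…,n}`. -/
def linExts (α : Type*) [Fintype α] [PartialOrder α] :
    Finset (α ≃ Fin (Fintype.card α)) :=
  Finset.univ.filter fun e => ∀ p q : α, p ≤ q → e p ≤ e q

/-- The linear distribution `μ_lin` on `J(P)`: the distribution of `ℓ⁻¹({1,…,k})` for a
uniformly random linear extension `ℓ` and uniform `k ∈ {0,1,…,n}`. -/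
def muLin (α : Type*) [Fintype α] [PartialOrder α] (I : Finset α) : ℝ :=
  (∑ e ∈ linExts α, ∑ k ∈ Finset.range (Fintype.card α + 1),
      if Finset.univ.filter (fun p => (e p : ℕ) < k) = I then (1 : ℝ) else 0) /
    ((linExts α).card * (Fintype.card α + 1))

/-- Weak reverse `P`-partitions of height `m`: order-preserving maps `α → {0,1,…,m}`. -/
def wrpp (α : Type*) [Fintype α] [PartialOrder α] (m : ℕ) : Finset (α → Fin (m + 1)) :=
  Finset.univ.filter fun ℓ => ∀ p q : α, p ≤ q → ℓ p ≤ ℓ q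

/-- The weak distribution `μ_{m,≤}` on `J(P)`: the distribution of `ℓ⁻¹({0,…,k−1})` for a
uniformly random weak reverse `P`-partition `ℓ` of height `m` and uniform `k ∈ {1,…,m}`. -/
def muWeak (α : Type*) [Fintype α] [PartialOrder α] (m : ℕ) (I : Finset α) : ℝ :=
  (∑ ℓ ∈ wrpp α m, ∑ k ∈ Finset.Icc 1 m,
      if Finset.univ.filter (fun p => (ℓ p : ℕ) < k) = I then (1 : ℝ) else 0) /
    ((wrpp α m).card * m)

/-!
Write `I = ℓ⁻¹{0, …, k - 1}` with `ℓ` order-preserving. Then `p` can be toggled in to `I` iff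
`ℓ q < k ≤ ℓ p` for all `q < p`, and out of `I` iff `ℓ p < k ≤ ℓ q` for all `q > p`. Exchanging
the label of `p` with the threshold, `(ℓ p, k) ↦ (k - 1, ℓ p)`, maps the pairs `(ℓ, k)` of the first
kind bijectively onto those of the second, with inverse `(ℓ p, k) ↦ (k, ℓ p + 1)`. As `μ_{m,≤}`
gives every pair the same weight, both toggle probabilities are the same.
-/

section Toggle

variable {α : Type*} [PartialOrder α] {I : Finset α} {p : α}

theorem canToggleIn_iff (hI : IsIdeal I) : CanToggleIn I p ↔ p ∉ I ∧ ∀ q < p, q ∈ I := by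
  refine and_congr_right fun _ => ⟨fun h q hq => ?_, fun h x hx q hqx => ?_⟩
  · exact (mem_insert.mp (h p (mem_insert_self p I) q hq.le)).resolve_left hq.ne
  · rcases mem_insert.mp hx with rfl | hx
    · rcases hqx.eq_or_lt with rfl | hq
      · exact mem_insert_self _ _
      · exact mem_insert_of_mem (h q hq)
    · exact mem_insert_of_mem (hI x hx q hqx)

theorem canToggleOut_iff (hI : IsIdeal I) :
    CanToggleOut I p ↔ p ∈ I ∧ ∀ q, p < q → q ∉ I := by
  refine and_congr_right fun _ => ⟨fun h q hpq hq => ?_, fun h x hx q hqx => ?_⟩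
  · exact (mem_erase.mp (h q (mem_erase.mpr ⟨hpq.ne', hq⟩) p hpq.le)).1 rfl
  · obtain ⟨hxp, hxI⟩ := mem_erase.mp hx
    refine mem_erase.mpr ⟨?_, hI x hxI q hqx⟩
    rintro rfl
    exact h x (hqx.lt_of_ne' hxp) hxI

theorem isIdeal_filter_lt [Fintype α] {β : Type*} [Preorder β] [DecidableLT β] {f : α → β}
    (hf : Monotone f) (k : β) :
    IsIdeal (univ.filter fun q => f q < k) := by
  intro x hx q hqx
  simp only [mem_filter, mem_univ, true_and] at hx ⊢
  exact (hf hqx).trans_lt hx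

end Toggle

theorem Monotone.update_of_le {α β : Type*} [PartialOrder α] [DecidableEq α] [Preorder β]
    {f : α → β} (hf : Monotone f) {p : α} {v : β} (hlo : ∀ q < p, f q ≤ v)
    (hhi : ∀ q, p < q → v ≤ f q) : Monotone (Function.update f p v) := by
  intro a b hab
  rcases eq_or_ne a p with rfl | ha <;> rcases eq_or_ne b a with rfl | hb
  · exact le_rfl
  · simpa [hb] using hhi b (hab.lt_of_ne' hb)
  · exact le_rfl
  · rcases eq_or_ne b p with rfl | hbp
    · simpa [ha] using hlo a (hab.lt_of_ne ha)
    · simpa [ha, hbp] using hf hab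

theorem Fin.clamp_val {m : ℕ} (i : Fin (m + 1)) : Fin.clamp i m = i :=
  Fin.ext (by rw [Fin.coe_clamp]; exact min_eq_left i.is_le)

namespace MuWeak

section Exchange

variable {α : Type*} {m : ℕ} {p : α} {ℓ : α → Fin (m + 1)} {k : ℕ}

def inToOut (p : α) (x : (α → Fin (m + 1)) × ℕ) : (α → Fin (m + 1)) × ℕ :=
  (Function.update x.1 p (Fin.clamp (x.2 - 1) m), x.1 p)

def outToIn (p : α) (x : (α → Fin (m + 1)) × ℕ) : (α → Fin (m + 1)) × ℕ :=
  (Function.update x.1 p (Fin.clamp x.2 m), x.1 p + 1)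

theorem outToIn_inToOut (hk1 : 1 ≤ k) (hkm : k ≤ m) :
    outToIn p (inToOut p (ℓ, k)) = (ℓ, k) := by
  simp only [inToOut, outToIn, Function.update_self, Function.update_idem, Fin.clamp_val,
    Function.update_eq_self, Fin.coe_clamp, Prod.mk.injEq, true_and]
  omega

theorem inToOut_outToIn (hkm : k ≤ m) : inToOut p (outToIn p (ℓ, k)) = (ℓ, k) := by
  simp only [inToOut, outToIn, Function.update_self, Function.update_idem, Nat.add_sub_cancel,
    Fin.clamp_val, Function.update_eq_self, Fin.coe_clamp, Prod.mk.injEq, true_and]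
  omega

end Exchange

variable {α : Type*} [Fintype α] [PartialOrder α] {m : ℕ}

theorem mem_wrpp {ℓ : α → Fin (m + 1)} : ℓ ∈ wrpp α m ↔ Monotone ℓ := by
  simp [wrpp, Monotone]

def weakPairs (α : Type*) [Fintype α] [PartialOrder α] (m : ℕ) (E : Finset α → Prop) :
    Finset ((α → Fin (m + 1)) × ℕ) :=
  (wrpp α m ×ˢ Icc 1 m).filter fun x => E (univ.filter fun q => (x.1 q : ℕ) < x.2)

theorem isIdeal_of_mem_wrpp {ℓ : α → Fin (m + 1)} (hℓ : ℓ ∈ wrpp α m) (k : ℕ) :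
    IsIdeal (univ.filter fun q => (ℓ q : ℕ) < k) :=
  isIdeal_filter_lt (f := fun q => (ℓ q : ℕ))
    (Fin.val_strictMono.monotone.comp (mem_wrpp.mp hℓ)) k

theorem prIdeal_muWeak (E : Finset α → Prop) :
    prIdeal (muWeak α m) E = #(weakPairs α m E) / (#(wrpp α m) * m) := by
  simp only [prIdeal, muWeak, ← sum_div, weakPairs, ← sum_boole, sum_product]
  rw [sum_comm]
  refine congrArg (· / _) (sum_congr rfl fun ℓ hℓ => ?_)
  rw [sum_comm]
  refine sum_congr rfl fun k _ => ?_
  simp [idealsFinset, isIdeal_of_mem_wrpp hℓ k]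

variable {p : α} {ℓ : α → Fin (m + 1)} {k : ℕ}

theorem mem_weakPairs_canToggleIn : (ℓ, k) ∈ weakPairs α m (CanToggleIn · p) ↔
    (Monotone ℓ ∧ 1 ≤ k ∧ k ≤ m) ∧ k ≤ ℓ p ∧ ∀ q < p, (ℓ q : ℕ) < k := by
  simp only [weakPairs, mem_filter, mem_product, mem_Icc, ← mem_wrpp]
  refine and_congr_right fun h => ?_
  simp [canToggleIn_iff (isIdeal_of_mem_wrpp h.1 k)]

theorem mem_weakPairs_canToggleOut : (ℓ, k) ∈ weakPairs α m (CanToggleOut · p) ↔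
    (Monotone ℓ ∧ 1 ≤ k ∧ k ≤ m) ∧ ℓ p < k ∧ ∀ q, p < q → k ≤ (ℓ q : ℕ) := by
  simp only [weakPairs, mem_filter, mem_product, mem_Icc, ← mem_wrpp]
  refine and_congr_right fun h => ?_
  simp [canToggleOut_iff (isIdeal_of_mem_wrpp h.1 k)]

theorem inToOut_mem (hx : (ℓ, k) ∈ weakPairs α m (CanToggleIn · p)) :
    inToOut p (ℓ, k) ∈ weakPairs α m (CanToggleOut · p) := by
  obtain ⟨⟨hℓ, hk1, hkm⟩, hkp, hlt⟩ := mem_weakPairs_canToggleIn.mp hx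
  dsimp only [inToOut]
  refine mem_weakPairs_canToggleOut.mpr
    ⟨⟨hℓ.update_of_le (fun q hq => ?_) (fun q hq => ?_), by omega, (ℓ p).is_le⟩, ?_, fun q hq => ?_⟩
  · have := hlt q hq
    rw [Fin.le_def, Fin.coe_clamp]
    omega
  · have : (ℓ p : ℕ) ≤ ℓ q := hℓ hq.le
    rw [Fin.le_def, Fin.coe_clamp]
    omega
  · rw [Function.update_self, Fin.coe_clamp]
    omega
  · rw [Function.update_of_ne hq.ne']
    exact hℓ hq.le

theorem outToIn_mem (hx : (ℓ, k) ∈ weakPairs α m (CanToggleOut · p)) :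
    outToIn p (ℓ, k) ∈ weakPairs α m (CanToggleIn · p) := by
  obtain ⟨⟨hℓ, hk1, hkm⟩, hpk, hgt⟩ := mem_weakPairs_canToggleOut.mp hx
  dsimp only [outToIn]
  refine mem_weakPairs_canToggleIn.mpr
    ⟨⟨hℓ.update_of_le (fun q hq => ?_) (fun q hq => ?_), by omega, by omega⟩, ?_, fun q hq => ?_⟩
  · have : (ℓ q : ℕ) ≤ ℓ p := hℓ hq.le
    rw [Fin.le_def, Fin.coe_clamp]
    omega
  · have := hgt q hq
    rw [Fin.le_def, Fin.coe_clamp]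
    omega
  · rw [Function.update_self, Fin.coe_clamp]
    omega
  · have : (ℓ q : ℕ) ≤ ℓ p := hℓ hq.le
    rw [Function.update_of_ne hq.ne]
    omega

theorem card_weakPairs_canToggleIn (p : α) :
    #(weakPairs α m (CanToggleIn · p)) = #(weakPairs α m (CanToggleOut · p)) := by
  refine card_nbij' (inToOut p) (outToIn p) (fun x hx => inToOut_mem hx)
    (fun x hx => outToIn_mem hx) (fun x hx => ?_) (fun x hx => ?_)
  · obtain ⟨⟨-, hk1, hkm⟩, -⟩ := mem_weakPairs_canToggleIn.mp hx
    exact outToIn_inToOut hk1 hkm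
  · obtain ⟨⟨-, -, hkm⟩, -⟩ := mem_weakPairs_canToggleOut.mp hx
    exact inToOut_outToIn hkm

end MuWeak

theorem muWeak_toggleSymmetric_general (α : Type*) [Fintype α] [PartialOrder α]
    (m : ℕ) : ToggleSymmetric (muWeak α m) := by
  intro p
  rw [MuWeak.prIdeal_muWeak, MuWeak.prIdeal_muWeak, MuWeak.card_weakPairs_canToggleIn]

/-- Lemma 2.7, weak case: for any finite poset and any `m ≥ 1`, the weak
distribution `μ_{m,≤}` is toggle-symmetric. -/
theorem muWeak_toggleSymmetric (α : Type*) [Fintype α] [PartialOrder α]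
    (m : ℕ) (hm : 1 ≤ m) : ToggleSymmetric (muWeak α m) :=
  muWeak_toggleSymmetric_general α m
end
end

section
/- Let P be a finite poset. For every order ideal I ∈ J(P), the probability μ_{m,≤}(I) converges to μ_lin(I) as m → ∞; that is, the weak distributions μ_{m,≤} converge pointwise to the linear distribution μ_lin. -/
open Finset
open scoped Classical

noncomputable section

variable {α : Type*} [Fintype α] [PartialOrder α]

/-!
Let `n = #α`. A weak reverse `P`-partition `ℓ : α → {0,…,m}` that is injective is a linear
extension `e` laid along an `n`-subset `S ⊆ {0,…,m}`, and then `ℓ⁻¹({0,…,k−1}) = I` exactly when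
`I` is the initial `#I`-segment of `e` and `S` has `#I` elements below `k`. Maps that are not
injective number `O(mⁿ⁻¹)`. Hence `#wrpp = e(P)·C(m+1, n) + O(mⁿ⁻¹)`, while the number of pairs
`(ℓ, k)` hitting `I` is `e_I(P)·∑ₖ C(k, #I)·C(m+1−k, n−#I) + O(mⁿ) = e_I(P)·C(m+2, n+1) + O(mⁿ)`,
where `e_I(P)` counts the linear extensions starting with `I`. Dividing by `m·#wrpp`,
`μ_{m,≤}(I) → (e_I(P)/(n+1)!) / (e(P)/n!) = e_I(P)/((n+1)·e(P)) = μ_lin(I)`.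
-/

open Filter Asymptotics Topology Function

theorem Nat.sum_range_choose_mul_choose (a b M : ℕ) :
    ∑ k ∈ range (M + 1), k.choose a * (M - k).choose b = (M + 1).choose (a + b + 1) := by
  induction M generalizing b with
  | zero =>
    cases a <;> cases b <;> simp [Nat.choose_succ_succ, Nat.choose_eq_zero_iff, eq_comm (a := 0)]
  | succ M ih =>
    rw [sum_range_succ, Nat.sub_self]
    cases b with
    | zero =>
      have h := ih 0
      simp only [Nat.choose_zero_right, mul_one] at h ⊢
      rw [h, Nat.choose_succ_succ' (M + 1) a, add_comm]
    | succ b =>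
      have hpascal : ∀ k ∈ range (M + 1), k.choose a * (M + 1 - k).choose (b + 1) =
          k.choose a * (M - k).choose b + k.choose a * (M - k).choose (b + 1) := fun k hk => by
        rw [Nat.sub_add_comm (mem_range_succ_iff.1 hk), Nat.choose_succ_succ, mul_add]
      rw [sum_congr rfl hpascal, sum_add_distrib, ih, ih, Nat.choose_zero_succ, mul_zero, add_zero,
        show a + (b + 1) + 1 = a + b + 1 + 1 by ring, Nat.choose_succ_succ' (M + 1)]

theorem Finset.card_powersetCard_filter_card_filter_eq {γ : Type*} (A : Finset γ) (P : γ → Prop)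
    [DecidablePred P] {n a : ℕ} (ha : a ≤ n) :
    #{S ∈ A.powersetCard n | #(S.filter P) = a} =
      (#(A.filter P)).choose a * (#(A.filter (¬ P ·))).choose (n - a) := by
  have hsplit : ∀ T U : Finset γ, T ⊆ A.filter P → U ⊆ A.filter (¬ P ·) →
      (T ∪ U).filter P = T ∧ (T ∪ U).filter (¬ P ·) = U := by
    intro T U hT hU
    constructor <;> ext x <;> grind
  rw [← card_powersetCard, ← card_powersetCard, ← card_product]
  refine card_nbij' (fun S => (S.filter P, S.filter (¬ P ·))) (fun TU => TU.1 ∪ TU.2)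
    ?_ ?_ (fun S _ => filter_union_filter_not_eq P S) ?_
  · intro S hS
    simp only [coe_filter, mem_powersetCard, Set.mem_ofPred_eq] at hS
    have hcard := card_filter_add_card_filter_not (s := S) P
    simp only [coe_product, Set.mem_prod, mem_coe, mem_powersetCard]
    exact ⟨⟨filter_subset_filter _ hS.1.1, hS.2⟩, filter_subset_filter _ hS.1.1, by omega⟩
  · rintro ⟨T, U⟩ hTU
    simp only [coe_product, Set.mem_prod, mem_coe, mem_powersetCard] at hTU
    obtain ⟨⟨hT, hTa⟩, hU, hUa⟩ := hTU
    have hdisj : Disjoint T U := disjoint_filter_filter_not A A P |>.mono hT hU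
    simp only [coe_filter, mem_powersetCard, Set.mem_ofPred_eq, (hsplit T U hT hU).1]
    refine ⟨⟨union_subset (hT.trans (filter_subset _ _)) (hU.trans (filter_subset _ _)), ?_⟩, hTa⟩
    rw [card_union_of_disjoint hdisj]
    omega
  · rintro ⟨T, U⟩ hTU
    simp only [coe_product, Set.mem_prod, mem_coe, mem_powersetCard] at hTU
    obtain ⟨h₁, h₂⟩ := hsplit T U hTU.1.1 hTU.2.1
    simp only [h₁, h₂]

theorem card_filter_eq_apply_mul_le {γ δ : Type*} [Fintype γ] [Fintype δ] [DecidableEq δ]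
    {p q : γ} (hpq : p ≠ q) :
    #{f : γ → δ | f p = f q} * Fintype.card δ ≤ Fintype.card δ ^ Fintype.card γ := by
  rw [← Fintype.card_fun, ← card_univ, ← card_product, ← card_univ]
  refine card_le_card_of_injOn (fun fd => update fd.1 q fd.2) (fun _ _ => mem_coe.2 (mem_univ _)) ?_
  rintro ⟨f, d⟩ hf ⟨f', d'⟩ hf' heq
  simp only [coe_product, Set.mem_prod, coe_filter, mem_univ, true_and, Set.mem_ofPred_eq] at hf hf'
  have hd : d = d' := by simpa using congrFun heq q
  subst hd
  refine Prod.ext (funext fun x => ?_) rfl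
  by_cases hx : x = q
  · subst hx
    simpa [hf, hf', update_of_ne hpq] using congrFun heq p
  · simpa [update_of_ne hx] using congrFun heq x

theorem card_filter_not_injective_mul_le (γ δ : Type*) [Fintype γ] [Fintype δ] [DecidableEq δ] :
    #{f : γ → δ | ¬ Injective f} * Fintype.card δ ≤
      Fintype.card γ ^ 2 * Fintype.card δ ^ Fintype.card γ := by
  have hcover : ({f : γ → δ | ¬ Injective f} : Finset _) ⊆
      (univ : Finset γ).offDiag.biUnion fun pq => {f : γ → δ | f pq.1 = f pq.2} := by
    intro f hf
    obtain ⟨p, q, hfpq, hpq⟩ := not_injective_iff.1 (mem_filter.1 hf).2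
    exact mem_biUnion.2 ⟨(p, q), by simpa using hpq, by simpa using hfpq⟩
  calc #{f : γ → δ | ¬ Injective f} * Fintype.card δ
      ≤ (∑ pq ∈ (univ : Finset γ).offDiag, #{f : γ → δ | f pq.1 = f pq.2}) * Fintype.card δ :=
        Nat.mul_le_mul_right _ ((card_le_card hcover).trans card_biUnion_le)
    _ ≤ ∑ _pq ∈ (univ : Finset γ).offDiag, Fintype.card δ ^ Fintype.card γ := by
        rw [sum_mul]
        exact sum_le_sum fun pq hpq => card_filter_eq_apply_mul_le (mem_offDiag.1 hpq).2.2
    _ ≤ Fintype.card γ ^ 2 * Fintype.card δ ^ Fintype.card γ := by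
        rw [sum_const, smul_eq_mul, offDiag_card, card_univ, sq]
        exact Nat.mul_le_mul_right _ (Nat.sub_le _ _)

theorem tendsto_choose_add_div_pow (c r : ℕ) :
    Tendsto (fun m : ℕ => ((m + c).choose r : ℝ) / (m : ℝ) ^ r) atTop (𝓝 (1 / r.factorial)) := by
  have hshift : (fun m : ℕ => ((m + c : ℕ) : ℝ)) ~[atTop] fun m => (m : ℝ) := by
    simpa [Pi.add_def] using IsEquivalent.refl.add_isLittleO
      ((isLittleO_const_id_atTop (c : ℝ)).comp_tendsto tendsto_natCast_atTop_atTop)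
  have hchoose : (fun m : ℕ => ((m + c).choose r : ℝ)) ~[atTop]
      fun m => (m : ℝ) ^ r / r.factorial :=
    ((isEquivalent_choose r).comp_tendsto (tendsto_add_atTop_nat c)).trans
      ((hshift.pow r).div IsEquivalent.refl)
  refine (hchoose.div (IsEquivalent.refl (u := fun m : ℕ => (m : ℝ) ^ r))).symm.tendsto_nhds
    (tendsto_const_nhds.congr' ?_)
  filter_upwards [eventually_ne_atTop 0] with m hm
  simp only [Pi.div_apply]
  field_simp

-- The factor `m + 1` on the left avoids writing the exponent as `r - 1`.
theorem isLittleO_pow_of_mul_succ_le {f : ℕ → ℕ} {C r : ℕ}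
    (h : ∀ m, f m * (m + 1) ≤ C * (m + 1) ^ r) :
    (fun m => (f m : ℝ)) =o[atTop] fun m => (m : ℝ) ^ r := by
  have hbound : (fun m => (f m : ℝ)) =O[atTop] fun m => ((m : ℝ) + 1) ^ r * ((m : ℝ) + 1)⁻¹ := by
    refine IsBigO.of_bound C (Eventually.of_forall fun m => ?_)
    have hm : (0 : ℝ) < m + 1 := by positivity
    rw [Real.norm_natCast, Real.norm_of_nonneg (by positivity), ← div_eq_mul_inv, mul_div_assoc',
      le_div_iff₀ hm]
    exact_mod_cast h m
  have hsucc : (fun m : ℕ => (m : ℝ) + 1) =O[atTop] fun m => (m : ℝ) := by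
    refine IsBigO.of_bound 2 ((eventually_ge_atTop 1).mono fun m hm => ?_)
    have hm' : (1 : ℝ) ≤ m := by exact_mod_cast hm
    rw [Real.norm_of_nonneg (by positivity), Real.norm_natCast]
    linarith
  have hinv : (fun m : ℕ => ((m : ℝ) + 1)⁻¹) =o[atTop] fun _ => (1 : ℝ) :=
    (isLittleO_one_iff ℝ).2 (by simpa using tendsto_one_div_add_atTop_nhds_zero_nat (𝕜 := ℝ))
  simpa using hbound.trans_isLittleO ((hsucc.pow r).mul_isLittleO hinv)

theorem tendsto_div_of_sub_isLittleO {ι : Type*} {l : Filter ι} {u v w : ι → ℝ} {c : ℝ}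
    (hv : Tendsto (fun i => v i / w i) l (𝓝 c)) (huv : (fun i => u i - v i) =o[l] w) :
    Tendsto (fun i => u i / w i) l (𝓝 c) := by
  simpa [sub_div] using hv.add huv.tendsto_div_nhds_zero

theorem tendsto_sum_choose_mul_choose_div_pow (a b : ℕ) :
    Tendsto (fun m : ℕ => ((∑ k ∈ Icc 1 m, k.choose a * (m + 1 - k).choose b : ℕ) : ℝ) /
      (m : ℝ) ^ (a + b + 1)) atTop (𝓝 (1 / (a + b + 1).factorial)) := by
  -- the terms `k = 0` and `k = m + 1` of `Nat.sum_range_choose_mul_choose a b (m + 1)`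
  set boundary : ℕ → ℕ := fun m => (0 : ℕ).choose a * (m + 1).choose b +
    (m + 1).choose a * (0 : ℕ).choose b
  have hsum : ∀ m, ∑ k ∈ Icc 1 m, k.choose a * (m + 1 - k).choose b + boundary m =
      (m + 2).choose (a + b + 1) := by
    intro m
    rw [← Nat.sum_range_choose_mul_choose, sum_range_succ, sum_range_succ',
      ← Ico_add_one_right_eq_Icc, sum_Ico_eq_sum_range]
    simp only [boundary, add_tsub_cancel_right, Nat.sub_zero, Nat.sub_self]
    ring_nf
  have hboundary : ∀ m, boundary m * (m + 1) ≤ 2 * (m + 1) ^ (a + b + 1) := by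
    intro m
    have h0 : ∀ j, (0 : ℕ).choose j ≤ (m + 1) ^ j := fun j =>
      (Nat.choose_le_pow 0 j).trans (Nat.pow_le_pow_left (Nat.zero_le _) j)
    have h1 : ∀ j, (m + 1).choose j ≤ (m + 1) ^ j := Nat.choose_le_pow _
    calc boundary m * (m + 1)
        ≤ ((m + 1) ^ a * (m + 1) ^ b + (m + 1) ^ a * (m + 1) ^ b) * (m + 1) := by
          dsimp only [boundary]
          gcongr <;> first | exact h0 _ | exact h1 _
      _ = 2 * (m + 1) ^ (a + b + 1) := by ring
  refine tendsto_div_of_sub_isLittleO (by simpa using tendsto_choose_add_div_pow 2 (a + b + 1)) ?_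
  refine ((isLittleO_pow_of_mul_succ_le hboundary).neg_left).congr_left fun m => ?_
  rw [← hsum m]
  push_cast
  ring

theorem mem_linExts_iff {e : α ≃ Fin (Fintype.card α)} : e ∈ linExts α ↔ Monotone e := by
  simp [linExts, Monotone]

theorem mem_wrpp_iff {m : ℕ} {ℓ : α → Fin (m + 1)} : ℓ ∈ wrpp α m ↔ Monotone ℓ := by
  simp [wrpp, Monotone]

theorem linExts_nonempty : (linExts α).Nonempty := by
  let _ : Fintype (LinearExtension α) := ‹Fintype α›
  let g : LinearExtension α ≃o Fin (Fintype.card α) := (monoEquivOfFin _ rfl).symm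
  exact ⟨g.toEquiv, mem_linExts_iff.2 fun _ _ h => g.monotone (toLinearExtension.monotone' h)⟩

theorem card_filter_val_lt_equiv {γ : Type*} [Fintype γ] (e : γ ≃ Fin (Fintype.card γ)) (j : ℕ) :
    #{p | (e p : ℕ) < j} = min (Fintype.card γ) j := by
  rw [← Fin.card_filter_val_lt]
  exact card_equiv e (by simp)

theorem filter_val_lt_equiv_eq_iff {γ : Type*} [Fintype γ] (e : γ ≃ Fin (Fintype.card γ)) {j : ℕ}
    (hj : j ≤ Fintype.card γ) (I : Finset γ) :
    univ.filter (fun p => (e p : ℕ) < j) = I ↔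
      j = #I ∧ univ.filter (fun p => (e p : ℕ) < #I) = I := by
  refine ⟨fun h => ?_, fun ⟨hjI, h⟩ => hjI ▸ h⟩
  have hjI : j = #I := by rw [← h, card_filter_val_lt_equiv, min_eq_right hj]
  exact ⟨hjI, hjI ▸ h⟩

def linExtsWithPrefix (I : Finset α) : Finset (α ≃ Fin (Fintype.card α)) :=
  {e ∈ linExts α | univ.filter (fun p => (e p : ℕ) < #I) = I}

theorem muLin_eq (I : Finset α) :
    muLin α I = #(linExtsWithPrefix I) / (#(linExts α) * (Fintype.card α + 1)) := by
  unfold muLin linExtsWithPrefix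
  congr 1
  rw [← sum_boole]
  refine sum_congr rfl fun e _ => ?_
  have hI : #I ∈ range (Fintype.card α + 1) := mem_range_succ_iff.2 (card_le_univ I)
  calc ∑ k ∈ range (Fintype.card α + 1),
        (if univ.filter (fun p => (e p : ℕ) < k) = I then (1 : ℝ) else 0)
      = ∑ k ∈ range (Fintype.card α + 1),
          if k = #I then (if univ.filter (fun p => (e p : ℕ) < #I) = I then 1 else 0) else 0 :=
        sum_congr rfl fun k hk => by
          simp only [filter_val_lt_equiv_eq_iff e (mem_range_succ_iff.1 hk), ite_and]
    _ = _ := by rw [sum_ite_eq', if_pos hI]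

section PlaceAlong

variable {γ β : Type*} [Fintype γ] [LinearOrder β]

def placeAlong (S : Finset β) (hS : #S = Fintype.card γ) (e : γ ≃ Fin (Fintype.card γ)) :
    γ → β :=
  fun p => S.orderEmbOfFin hS (e p)

def linExtOfInjective (ℓ : γ → β) (hℓ : Injective ℓ) : γ ≃ Fin (Fintype.card γ) :=
  have hcard : #(univ.image ℓ) = Fintype.card γ := by rw [card_image_of_injective _ hℓ, card_univ]
  Equiv.ofBijective
    (fun p => ((univ.image ℓ).orderIsoOfFin hcard).symm ⟨ℓ p, mem_image_of_mem ℓ (mem_univ p)⟩)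
    ((Fintype.bijective_iff_injective_and_card _).2
      ⟨fun _ _ h => hℓ (congrArg Subtype.val ((OrderIso.symm _).injective h)), by simp⟩)

theorem placeAlong_injective (S : Finset β) (hS : #S = Fintype.card γ)
    (e : γ ≃ Fin (Fintype.card γ)) : Injective (placeAlong S hS e) :=
  (S.orderEmbOfFin hS).injective.comp e.injective

theorem monotone_placeAlong [Preorder γ] (S : Finset β) (hS : #S = Fintype.card γ)
    {e : γ ≃ Fin (Fintype.card γ)} (he : Monotone e) : Monotone (placeAlong S hS e) :=
  (S.orderEmbOfFin hS).monotone.comp he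

theorem image_placeAlong (S : Finset β) (hS : #S = Fintype.card γ)
    (e : γ ≃ Fin (Fintype.card γ)) : univ.image (placeAlong S hS e) = S := by
  change univ.image ((S.orderEmbOfFin hS) ∘ e) = S
  rw [← image_image, image_univ_equiv, image_orderEmbOfFin_univ]

theorem placeAlong_linExtOfInjective {ℓ : γ → β} (hℓ : Injective ℓ)
    (h : #(univ.image ℓ) = Fintype.card γ) :
    placeAlong (univ.image ℓ) h (linExtOfInjective ℓ hℓ) = ℓ := by
  funext p
  simp [placeAlong, linExtOfInjective, ← coe_orderIsoOfFin_apply]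

theorem linExtOfInjective_placeAlong (S : Finset β) (hS : #S = Fintype.card γ)
    (e : γ ≃ Fin (Fintype.card γ)) (h : Injective (placeAlong S hS e)) :
    linExtOfInjective (placeAlong S hS e) h = e := by
  have hemb : ∀ (T : Finset β) (hT : #T = Fintype.card γ), T = S →
      T.orderEmbOfFin hT = S.orderEmbOfFin hS := by
    rintro _ _ rfl
    rfl
  refine Equiv.ext fun p => ?_
  simp only [linExtOfInjective, Equiv.ofBijective_apply, OrderIso.symm_apply_eq]
  rw [← Subtype.coe_inj, coe_orderIsoOfFin_apply, hemb _ _ (image_placeAlong S hS e)]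
  rfl

theorem monotone_linExtOfInjective [Preorder γ] {ℓ : γ → β} (hℓ : Injective ℓ)
    (hmono : Monotone ℓ) : Monotone (linExtOfInjective ℓ hℓ) := fun _ _ h => by
  simp only [linExtOfInjective, Equiv.ofBijective_apply]
  exact OrderIso.monotone _ (Subtype.mk_le_mk.2 (hmono h))

theorem filter_placeAlong_eq {D : β → Prop} [DecidablePred D] (hD : Antitone D) (S : Finset β)
    (hS : #S = Fintype.card γ) (e : γ ≃ Fin (Fintype.card γ)) :
    univ.filter (fun p => D (placeAlong S hS e p)) =
      univ.filter (fun p => (e p : ℕ) < #(S.filter D)) := by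
  have hcard : #{i | D (S.orderEmbOfFin hS i)} = #(S.filter D) := by
    conv_rhs => rw [← image_orderEmbOfFin_univ S hS]
    rw [filter_image, card_image_of_injective _ (S.orderEmbOfFin hS).injective]
  ext p
  rw [mem_filter, mem_filter, ← hcard]
  simp only [mem_univ, true_and]
  exact (Fin.lt_card_filter_univ_iff_apply_of_imp _
    fun i j hji => hD ((S.orderEmbOfFin hS).monotone hji)).symm

end PlaceAlong

section InjectiveMonotone

variable {β : Type*} [Fintype β] [LinearOrder β]

theorem sum_linExts_powersetCard_eq {M : Type*} [AddCommMonoid M] {g : (α → β) → M}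
    {G : (α ≃ Fin (Fintype.card α)) → Finset β → M}
    (hG : ∀ e S (hS : #S = Fintype.card α), G e S = g (placeAlong S hS e)) :
    ∑ e ∈ linExts α, ∑ S ∈ powersetCard (Fintype.card α) univ, G e S =
      ∑ ℓ with Monotone ℓ ∧ Injective ℓ, g ℓ := by
  rw [← sum_product']
  refine sum_bij' (fun eS h => placeAlong eS.2 (mem_powersetCard.1 (mem_product.1 h).2).2 eS.1)
    (fun ℓ h => (linExtOfInjective ℓ (mem_filter.1 h).2.2, univ.image ℓ)) ?_ ?_ ?_ ?_ ?_
  · rintro ⟨e, S⟩ h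
    simp only [mem_product, mem_linExts_iff] at h
    exact mem_filter.2 ⟨mem_univ _, monotone_placeAlong _ _ h.1, placeAlong_injective _ _ _⟩
  · intro ℓ h
    simp only [mem_filter, mem_univ, true_and] at h
    simp only [mem_product, mem_linExts_iff, mem_powersetCard, subset_univ, true_and]
    exact ⟨monotone_linExtOfInjective h.2 h.1, by rw [card_image_of_injective _ h.2, card_univ]⟩
  · rintro ⟨e, S⟩ _
    simp only [linExtOfInjective_placeAlong, image_placeAlong]
  · intro ℓ h
    exact placeAlong_linExtOfInjective (mem_filter.1 h).2.2 _
  · rintro ⟨e, S⟩ _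
    exact hG e S _

end InjectiveMonotone

def numWeak (I : Finset α) (m : ℕ) : ℕ :=
  ∑ ℓ ∈ wrpp α m, #{k ∈ Icc 1 m | univ.filter (fun p => (ℓ p : ℕ) < k) = I}

theorem muWeak_eq (I : Finset α) (m : ℕ) :
    muWeak α m I = numWeak I m / (#(wrpp α m) * m) := by
  simp [muWeak, numWeak, sum_boole]

theorem filter_wrpp_injective (m : ℕ) :
    {ℓ ∈ wrpp α m | Injective ℓ} = ({ℓ | Monotone ℓ ∧ Injective ℓ} : Finset _) := by
  ext ℓ
  simp [mem_wrpp_iff]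

theorem card_wrpp_eq (m : ℕ) :
    #(wrpp α m) = #(linExts α) * (m + 1).choose (Fintype.card α) +
      #{ℓ ∈ wrpp α m | ¬ Injective ℓ} := by
  rw [← card_filter_add_card_filter_not (s := wrpp α m) Injective, filter_wrpp_injective,
    card_eq_sum_ones, ← sum_linExts_powersetCard_eq (G := fun _ _ => 1) fun _ _ _ => rfl]
  simp

theorem card_wrpp_not_injective_mul_le (m : ℕ) :
    #{ℓ ∈ wrpp α m | ¬ Injective ℓ} * (m + 1) ≤
      Fintype.card α ^ 2 * (m + 1) ^ Fintype.card α := by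
  calc #{ℓ ∈ wrpp α m | ¬ Injective ℓ} * (m + 1)
      ≤ #{ℓ : α → Fin (m + 1) | ¬ Injective ℓ} * Fintype.card (Fin (m + 1)) := by
        rw [Fintype.card_fin]
        exact Nat.mul_le_mul_right _ (card_le_card (filter_subset_filter _ (subset_univ _)))
    _ ≤ _ := by
        simpa using card_filter_not_injective_mul_le α (Fin (m + 1))

theorem sum_powersetCard_card_filter_card_filter_val_lt (m n a : ℕ) (ha : a ≤ n) :
    ∑ S ∈ powersetCard n (univ : Finset (Fin (m + 1))),
        #{k ∈ Icc 1 m | #(S.filter fun b : Fin (m + 1) => (b : ℕ) < k) = a} =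
      ∑ k ∈ Icc 1 m, k.choose a * (m + 1 - k).choose (n - a) := by
  simp only [card_filter _ (Icc 1 m)]
  rw [sum_comm]
  refine sum_congr rfl fun k hk => ?_
  have hk : k ≤ m + 1 := (mem_Icc.1 hk).2.trans (Nat.le_succ m)
  have hlt : #{b : Fin (m + 1) | (b : ℕ) < k} = k := by
    rw [Fin.card_filter_val_lt, min_eq_right hk]
  have hge : #{b : Fin (m + 1) | ¬ (b : ℕ) < k} = m + 1 - k := by
    have hcard := card_filter_add_card_filter_not (s := (univ : Finset (Fin (m + 1))))
      fun b => (b : ℕ) < k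
    rw [card_univ, Fintype.card_fin, hlt] at hcard
    omega
  rw [← card_filter, card_powersetCard_filter_card_filter_eq _ _ ha, hlt, hge]

theorem sum_monotone_injective_card_filter_eq (I : Finset α) (m : ℕ) :
    ∑ ℓ : α → Fin (m + 1) with Monotone ℓ ∧ Injective ℓ,
        #{k ∈ Icc 1 m | univ.filter (fun p => (ℓ p : ℕ) < k) = I} =
      #(linExtsWithPrefix I) *
        ∑ k ∈ Icc 1 m, k.choose #I * (m + 1 - k).choose (Fintype.card α - #I) := by
  rw [← sum_linExts_powersetCard_eq
    (G := fun e S => (if univ.filter (fun p => (e p : ℕ) < #I) = I then 1 else 0) *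
      #{k ∈ Icc 1 m | #(S.filter fun b : Fin (m + 1) => (b : ℕ) < k) = #I}) ?_]
  · simp_rw [← mul_sum, ← sum_mul, sum_boole, Nat.cast_id,
      sum_powersetCard_card_filter_card_filter_val_lt _ _ _ (card_le_univ I)]
    rfl
  · intro e S hS
    have hiff : ∀ k, univ.filter (fun p => ((placeAlong S hS e p : Fin (m + 1)) : ℕ) < k) = I ↔
        #(S.filter fun b : Fin (m + 1) => (b : ℕ) < k) = #I ∧
          univ.filter (fun p => (e p : ℕ) < #I) = I := fun k => by
      rw [filter_placeAlong_eq (D := fun b : Fin (m + 1) => (b : ℕ) < k)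
        (fun _ _ hab h => lt_of_le_of_lt hab h) S hS e]
      exact filter_val_lt_equiv_eq_iff e ((card_filter_le _ _).trans hS.le) I
    rw [filter_congr fun k _ => hiff k]
    split_ifs with h <;> simp [h]

theorem numWeak_eq (I : Finset α) (m : ℕ) :
    numWeak I m = #(linExtsWithPrefix I) *
        ∑ k ∈ Icc 1 m, k.choose #I * (m + 1 - k).choose (Fintype.card α - #I) +
      ∑ ℓ ∈ wrpp α m with ¬ Injective ℓ,
        #{k ∈ Icc 1 m | univ.filter (fun p => (ℓ p : ℕ) < k) = I} := by
  rw [numWeak, ← sum_filter_add_sum_filter_not _ Injective, filter_wrpp_injective,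
    sum_monotone_injective_card_filter_eq]

theorem sum_wrpp_not_injective_card_filter_mul_le (I : Finset α) (m : ℕ) :
    (∑ ℓ ∈ wrpp α m with ¬ Injective ℓ,
        #{k ∈ Icc 1 m | univ.filter (fun p => (ℓ p : ℕ) < k) = I}) * (m + 1) ≤
      Fintype.card α ^ 2 * (m + 1) ^ (Fintype.card α + 1) := by
  have hsum : ∑ ℓ ∈ wrpp α m with ¬ Injective ℓ,
      #{k ∈ Icc 1 m | univ.filter (fun p => (ℓ p : ℕ) < k) = I} ≤
      #{ℓ ∈ wrpp α m | ¬ Injective ℓ} * (m + 1) := by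
    refine (sum_le_card_nsmul _ _ (m + 1) fun ℓ _ => ?_).trans_eq (smul_eq_mul _ _)
    exact (card_filter_le _ _).trans (by simp)
  calc _ ≤ #{ℓ ∈ wrpp α m | ¬ Injective ℓ} * (m + 1) * (m + 1) := Nat.mul_le_mul_right _ hsum
    _ ≤ Fintype.card α ^ 2 * (m + 1) ^ Fintype.card α * (m + 1) :=
        Nat.mul_le_mul_right _ (card_wrpp_not_injective_mul_le m)
    _ = _ := by ring

theorem tendsto_card_wrpp_div_pow :
    Tendsto (fun m => (#(wrpp α m) : ℝ) / (m : ℝ) ^ Fintype.card α) atTop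
      (𝓝 (#(linExts α) / (Fintype.card α).factorial)) := by
  refine tendsto_div_of_sub_isLittleO
    (v := fun m => #(linExts α) * ((m + 1).choose (Fintype.card α) : ℝ)) ?_ ?_
  · simpa only [mul_div_assoc, mul_one_div] using
      (tendsto_choose_add_div_pow 1 (Fintype.card α)).const_mul (#(linExts α) : ℝ)
  · refine (isLittleO_pow_of_mul_succ_le card_wrpp_not_injective_mul_le).congr_left fun m => ?_
    rw [card_wrpp_eq]
    push_cast
    ring

theorem tendsto_numWeak_div_pow (I : Finset α) :
    Tendsto (fun m => (numWeak I m : ℝ) / (m : ℝ) ^ (Fintype.card α + 1)) atTop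
      (𝓝 (#(linExtsWithPrefix I) / (Fintype.card α + 1).factorial)) := by
  refine tendsto_div_of_sub_isLittleO (v := fun m => #(linExtsWithPrefix I) *
    ((∑ k ∈ Icc 1 m, k.choose #I * (m + 1 - k).choose (Fintype.card α - #I) : ℕ) : ℝ)) ?_ ?_
  · have h := (tendsto_sum_choose_mul_choose_div_pow #I (Fintype.card α - #I)).const_mul
      (#(linExtsWithPrefix I) : ℝ)
    rw [Nat.add_sub_cancel' (card_le_univ I)] at h
    simpa only [mul_div_assoc, mul_one_div] using h
  · refine (isLittleO_pow_of_mul_succ_le (sum_wrpp_not_injective_card_filter_mul_le I)).congr_left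
      fun m => ?_
    rw [numWeak_eq]
    push_cast
    ring

/-- part of Proposition 2.8: the weak distributions `μ_{m,≤}` converge
pointwise, as `m → ∞`, to the linear distribution `μ_lin`. -/
theorem muWeak_tendsto_muLin (α : Type*) [Fintype α] [PartialOrder α] :
    ∀ I ∈ idealsFinset α,
      Filter.Tendsto (fun m : ℕ => muWeak α m I) Filter.atTop (nhds (muLin α I)) := by
  intro I _
  have hlinExts : (0 : ℝ) < #(linExts α) := by exact_mod_cast linExts_nonempty.card_pos
  have hlimit : (#(linExtsWithPrefix I) / (Fintype.card α + 1).factorial : ℝ) /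
      (#(linExts α) / (Fintype.card α).factorial) = muLin α I := by
    rw [muLin_eq, Nat.factorial_succ]
    push_cast
    field_simp
  rw [← hlimit]
  refine ((tendsto_numWeak_div_pow I).div tendsto_card_wrpp_div_pow (by positivity)).congr' ?_
  filter_upwards [eventually_ne_atTop 0] with m hm
  have hm' : (m : ℝ) ^ Fintype.card α ≠ 0 := pow_ne_zero _ (Nat.cast_ne_zero.2 hm)
  rw [Pi.div_apply, muWeak_eq, div_div_div_eq, pow_succ, mul_assoc, mul_comm (_ ^ _),
    mul_div_mul_right _ _ hm', mul_comm (m : ℝ)]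
end
end
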